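/- Let κ : [x,∞) → [0,∞) be measurable and define δ = κ/(1+κ), so δ : [x,∞) → [0,1). Suppose V solves V_t = X_t - ∫_{(0,t]} δ(V̄_s) dX̄_s where X is càdlàg without upward jumps with X_0 = x and V̄_s = sup_{r≤s} V_r. Then V also solves the alternative equation V_t = X_t - ∫_{(0,t]} κ(V̄_s) dV̄_s. -/

import Mathlib

/-! With `A_t = ∫_{(0,t]} δ(V̄_s) dX̄_s` we have `V = X - A`, where `A` is nondecreasing and, since
`0 ≤ δ ≤ 1`, grows no faster than `X̄`; for such `A` the running maximum is `V̄ = X̄ - A`. Hence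
`dV̄ = (1 - δ(V̄)) dX̄` on `(0, ∞)`, and `κ (1 - δ) = δ` turns `∫ κ(V̄) dV̄` into `∫ δ(V̄) dX̄`. -/

open MeasureTheory Set Filter

/-- Running maximum of a path on `[0, t]`. -/
noncomputable def runMax (X : ℝ → ℝ) (t : ℝ) : ℝ := sSup (X '' Set.Icc 0 t)

open scoped Topology

lemma bddAbove_image_Icc_of_cadlag {X : ℝ → ℝ}
    (hrc : ∀ t ≥ (0:ℝ), ContinuousWithinAt X (Ici t) t)
    (hll : ∀ t > (0:ℝ), ∃ l : ℝ, Tendsto X (𝓝[<] t) (𝓝 l)) (t : ℝ) :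
    BddAbove (X '' Icc 0 t) := by
  refine isCompact_Icc.induction_on (p := fun s => BddAbove (X '' s)) (by simp)
    (fun s u hsu hu => hu.mono (image_mono hsu))
    (fun s u hs hu => by simpa only [image_union] using hs.union hu) fun y hy => ?_
  obtain ⟨c, hc⟩ : ∃ c, ∀ᶠ u in 𝓝[Icc 0 t] y, X u < c := by
    rcases hy.1.eq_or_lt with rfl | hy0
    · exact ⟨_, nhdsWithin_mono _ Icc_subset_Ici_self
        (hrc 0 le_rfl (gt_mem_nhds (lt_add_one _)))⟩
    · obtain ⟨l, hl⟩ := hll y hy0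
      refine ⟨max (X y) l + 1, nhdsWithin_le_nhds ?_⟩
      rw [← nhdsLT_sup_nhdsGE]
      exact ⟨hl (gt_mem_nhds (by linarith [le_max_right (X y) l])),
        hrc y hy.1 (gt_mem_nhds (by linarith [le_max_left (X y) l]))⟩
  exact ⟨_, hc, c, forall_mem_image.2 fun _ hu => le_of_lt hu⟩

section runMax

variable {X : ℝ → ℝ} {s t : ℝ}

lemma le_runMax (hX : BddAbove (X '' Icc 0 t)) (hs : s ∈ Icc 0 t) : X s ≤ runMax X t :=
  le_csSup hX (mem_image_of_mem X hs)

lemma runMax_le {c : ℝ} (ht : 0 ≤ t) (hX : ∀ s ∈ Icc 0 t, X s ≤ c) : runMax X t ≤ c :=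
  csSup_le ((nonempty_Icc.2 ht).image X) (forall_mem_image.2 hX)

lemma runMax_of_neg (ht : t < 0) : runMax X t = 0 := by
  rw [runMax, Icc_eq_empty (by linarith), image_empty, Real.sSup_empty]

lemma runMax_self_zero : runMax X 0 = X 0 := by
  rw [runMax, Icc_self, image_singleton, csSup_singleton]

lemma measurable_runMax_of_eq (G : StieltjesFunction ℝ) (hG : ∀ t ≥ (0:ℝ), G t = runMax X t) :
    Measurable (runMax X) := by
  have hX : runMax X = (Ici 0).indicator G := funext fun t => by
    by_cases ht : 0 ≤ t
    · simp [ht, hG]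
    · simp [ht, runMax_of_neg (not_le.1 ht)]
  exact hX ▸ G.mono.measurable.indicator measurableSet_Ici

lemma runMax_sub_of_monotoneOn {A V : ℝ → ℝ} (ht : 0 ≤ t) (hX : BddAbove (X '' Icc 0 t))
    (hA : MonotoneOn A (Icc 0 t))
    (hAX : ∀ s ∈ Icc 0 t, A t - A s ≤ runMax X t - runMax X s)
    (hV : ∀ s ∈ Icc 0 t, V s = X s - A s) :
    runMax V t = runMax X t - A t := by
  have hV_le : ∀ s ∈ Icc 0 t, V s ≤ runMax X t - A t := fun s hs => by
    have : X s ≤ runMax X s :=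
      le_runMax (hX.mono (image_mono (Icc_subset_Icc_right hs.2))) ⟨hs.1, le_rfl⟩
    linarith [hV s hs, hAX s hs]
  refine le_antisymm (runMax_le ht hV_le) (sub_le_iff_le_add.2 (runMax_le ht fun s hs => ?_))
  have : V s ≤ runMax V t := le_runMax ⟨_, forall_mem_image.2 hV_le⟩ hs
  linarith [hV s hs, hA hs ⟨ht, le_rfl⟩ hs.2]

end runMax

lemma setIntegral_Ioc_sub_setIntegral_Ioc {μ : Measure ℝ} {f : ℝ → ℝ} {a b c : ℝ}
    (hab : a ≤ b) (hbc : b ≤ c) (hf : IntegrableOn f (Ioc a c) μ) :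
    ∫ s in Ioc a c, f s ∂μ - ∫ s in Ioc a b, f s ∂μ = ∫ s in Ioc b c, f s ∂μ := by
  rw [← Ioc_union_Ioc_eq_Ioc hab hbc, setIntegral_union (Ioc_disjoint_Ioc_of_le le_rfl)
    measurableSet_Ioc (hf.mono_set (Ioc_subset_Ioc_right hbc))
    (hf.mono_set (Ioc_subset_Ioc_left hab)), add_sub_cancel_left]

namespace StieltjesFunction

variable {F G : StieltjesFunction ℝ} {f : ℝ → ℝ}

lemma integrableOn_const_Ioc (a b c : ℝ) : IntegrableOn (fun _ => c) (Ioc a b) F.measure :=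
  integrableOn_const (by simp [F.measure_Ioc])

lemma setIntegral_Ioc_one {a b : ℝ} (hab : a ≤ b) :
    ∫ _ in Ioc a b, (1 : ℝ) ∂F.measure = F b - F a := by
  rw [setIntegral_const, measureReal_def, F.measure_Ioc,
    ENNReal.toReal_ofReal (sub_nonneg.2 (F.mono hab)), smul_eq_mul, mul_one]

lemma integrableOn_Ioc_of_norm_le {a b C : ℝ} (hf : AEStronglyMeasurable f F.measure)
    (hfC : ∀ s ∈ Ioc a b, ‖f s‖ ≤ C) : IntegrableOn f (Ioc a b) F.measure :=
  Measure.integrableOn_of_bounded (by simp [F.measure_Ioc]) hf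
    ((ae_restrict_iff' measurableSet_Ioc).2 (Eventually.of_forall hfC))

lemma setIntegral_Ioc_le_sub {a b : ℝ} (hab : a ≤ b) (hfi : IntegrableOn f (Ioc a b) F.measure)
    (hf : ∀ s ∈ Ioc a b, f s ≤ 1) : ∫ s in Ioc a b, f s ∂F.measure ≤ F b - F a :=
  setIntegral_Ioc_one hab ▸
    setIntegral_mono_on hfi (integrableOn_const_Ioc a b 1) measurableSet_Ioc hf

lemma sub_eq_setIntegral_one_sub {D : ℝ → ℝ} {a b : ℝ} (ha : 0 ≤ a) (hab : a ≤ b)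
    (hDi : IntegrableOn D (Ioc 0 b) F.measure)
    (hG : ∀ t ∈ Icc a b, G t = F t - ∫ s in Ioc 0 t, D s ∂F.measure) :
    G b - G a = ∫ s in Ioc a b, (1 - D s) ∂F.measure := by
  rw [integral_sub (integrableOn_const_Ioc a b 1) (hDi.mono_set (Ioc_subset_Ioc_left ha)),
    setIntegral_Ioc_one hab, ← setIntegral_Ioc_sub_setIntegral_Ioc ha hab hDi,
    hG a ⟨le_rfl, hab⟩, hG b ⟨hab, le_rfl⟩]
  ring

lemma measure_restrict_Ioi_eq_withDensity {c : ℝ} (hf_nonneg : ∀ s > c, 0 ≤ f s)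
    (hfi : ∀ b, IntegrableOn f (Ioc c b) F.measure)
    (hG : ∀ a b, c ≤ a → a ≤ b → G b - G a = ∫ s in Ioc a b, f s ∂F.measure) :
    G.measure.restrict (Ioi c) =
      (F.measure.withDensity fun s => ENNReal.ofReal (f s)).restrict (Ioi c) := by
  refine Measure.ext_of_Ioc' _ _ (fun a b _ => ?_) fun a b _ => ?_
  · rw [Measure.restrict_apply measurableSet_Ioc]
    exact (measure_mono inter_subset_left).trans_lt measure_Ioc_lt_top |>.ne
  rw [Measure.restrict_apply measurableSet_Ioc, Measure.restrict_apply measurableSet_Ioc,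
    Ioc_inter_Ioi]
  rcases le_or_gt b (a ⊔ c) with hb | hb
  · simp [Ioc_eq_empty_of_le hb]
  have hfi' : IntegrableOn f (Ioc (a ⊔ c) b) F.measure :=
    (hfi b).mono_set (Ioc_subset_Ioc_left le_sup_right)
  rw [G.measure_Ioc, hG _ _ le_sup_right hb.le, withDensity_apply _ measurableSet_Ioc,
    ofReal_integral_eq_lintegral_ofReal hfi' ((ae_restrict_iff' measurableSet_Ioc).2
      (Eventually.of_forall fun s hs => hf_nonneg s (lt_of_le_of_lt le_sup_right hs.1)))]

lemma setIntegral_Ioc_eq_setIntegral_mul {c t : ℝ} (hf_nonneg : ∀ s > c, 0 ≤ f s)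
    (hfi : ∀ b, IntegrableOn f (Ioc c b) F.measure)
    (hG : ∀ a b, c ≤ a → a ≤ b → G b - G a = ∫ s in Ioc a b, f s ∂F.measure) (g : ℝ → ℝ) :
    ∫ s in Ioc c t, g s ∂G.measure = ∫ s in Ioc c t, f s * g s ∂F.measure := by
  rw [← Measure.restrict_restrict_of_subset Ioc_subset_Ioi_self,
    measure_restrict_Ioi_eq_withDensity hf_nonneg hfi hG,
    Measure.restrict_restrict_of_subset Ioc_subset_Ioi_self,
    setIntegral_withDensity_eq_setIntegral_toReal_smul₀ (hfi t).aemeasurable.ennreal_ofReal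
      (Eventually.of_forall fun _ => ENNReal.ofReal_lt_top) _ measurableSet_Ioc]
  refine setIntegral_congr_fun measurableSet_Ioc fun s hs => ?_
  rw [ENNReal.toReal_ofReal (hf_nonneg s hs.1), smul_eq_mul]

end StieltjesFunction

lemma runMax_sub_setIntegral {X V D : ℝ → ℝ} {F : StieltjesFunction ℝ} {t : ℝ} (ht : 0 ≤ t)
    (hX : BddAbove (X '' Icc 0 t)) (hF : ∀ s ∈ Icc 0 t, F s = runMax X s)
    (hD : ∀ s ∈ Ioc 0 t, D s ∈ Icc 0 1) (hDi : IntegrableOn D (Ioc 0 t) F.measure)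
    (hV : ∀ s ∈ Icc 0 t, V s = X s - ∫ r in Ioc 0 s, D r ∂F.measure) :
    runMax V t = F t - ∫ r in Ioc 0 t, D r ∂F.measure := by
  have hA_sub : ∀ a b, 0 ≤ a → a ≤ b → b ≤ t →
      ∫ r in Ioc 0 b, D r ∂F.measure - ∫ r in Ioc 0 a, D r ∂F.measure =
        ∫ r in Ioc a b, D r ∂F.measure := fun a b ha hab hbt =>
    setIntegral_Ioc_sub_setIntegral_Ioc ha hab (hDi.mono_set (Ioc_subset_Ioc_right hbt))
  have hD' : ∀ a b, 0 ≤ a → b ≤ t → ∀ r ∈ Ioc a b, D r ∈ Icc 0 1 := fun a b ha hbt r hr =>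
    hD r ⟨ha.trans_lt hr.1, hr.2.trans hbt⟩
  rw [hF t ⟨ht, le_rfl⟩]
  refine runMax_sub_of_monotoneOn ht hX (fun a ha b hb hab => ?_) (fun s hs => ?_) hV
  · exact sub_nonneg.1 (hA_sub a b ha.1 hab hb.2 ▸
      setIntegral_nonneg measurableSet_Ioc fun r hr => (hD' a b ha.1 hb.2 r hr).1)
  · rw [← hF s hs, ← hF t ⟨ht, le_rfl⟩, hA_sub s t hs.1 hs.2 le_rfl]
    exact F.setIntegral_Ioc_le_sub hs.2 (hDi.mono_set (Ioc_subset_Ioc_left hs.1))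
      fun r hr => (hD' s t hs.1 le_rfl r hr).2

lemma div_one_add_mem_Icc {k : ℝ} (hk : 0 ≤ k) : k / (1 + k) ∈ Icc 0 1 :=
  ⟨by positivity, (div_le_one (by linarith)).2 (by linarith)⟩

lemma mul_one_sub_div_one_add {k : ℝ} (hk : 1 + k ≠ 0) : k * (1 - k / (1 + k)) = k / (1 + k) := by
  field_simp
  ring

theorem alternative_natural_tax_equation_general
    (x : ℝ) (X : ℝ → ℝ)
    (hX0 : X 0 = x)
    (hrc : ∀ t ≥ (0:ℝ), ContinuousWithinAt X (Set.Ici t) t)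
    (hll : ∀ t > (0:ℝ), ∃ l : ℝ, Tendsto X (nhdsWithin t (Set.Iio t)) (nhds l))
    (F : StieltjesFunction ℝ) (hF : ∀ t ≥ (0:ℝ), F t = runMax X t)
    (κ : ℝ → ℝ) (hκmeas : Measurable κ) (hκ : ∀ z ≥ x, 0 ≤ κ z)
    (δ : ℝ → ℝ) (hδ : ∀ z, δ z = κ z / (1 + κ z))
    -- V solves the natural tax integral equation with rate δ:
    (V : ℝ → ℝ)
    (hV : ∀ t ≥ (0:ℝ), V t = X t - ∫ s in Set.Ioc 0 t, δ (runMax V s) ∂F.measure)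
    -- the Lebesgue–Stieltjes measure of the running maximum of V:
    (G : StieltjesFunction ℝ) (hG : ∀ t ≥ (0:ℝ), G t = runMax V t) :
    ∀ t ≥ (0:ℝ), V t = X t - ∫ s in Set.Ioc 0 t, κ (runMax V s) ∂G.measure := by
  have hx_le : ∀ s ≥ (0:ℝ), x ≤ runMax V s := fun s hs => by
    have hV0 : V 0 = x := by simpa [hX0] using hV 0 le_rfl
    calc x = G 0 := by rw [hG 0 le_rfl, runMax_self_zero, hV0]
      _ ≤ G s := G.mono hs
      _ = runMax V s := hG s hs
  have hD_mem : ∀ s > (0:ℝ), δ (runMax V s) ∈ Icc 0 1 := fun s hs =>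
    hδ _ ▸ div_one_add_mem_Icc (hκ _ (hx_le s hs.le))
  have hD_meas : Measurable fun s => δ (runMax V s) := by
    have hδ_meas : Measurable δ := funext hδ ▸ hκmeas.div (measurable_const.add hκmeas)
    exact hδ_meas.comp (measurable_runMax_of_eq G hG)
  have hD_int : ∀ b, IntegrableOn (fun s => δ (runMax V s)) (Ioc 0 b) F.measure := fun b =>
    F.integrableOn_Ioc_of_norm_le hD_meas.aestronglyMeasurable fun s hs =>
      abs_le.2 ⟨by linarith [(hD_mem s hs.1).1], (hD_mem s hs.1).2⟩
  have hG_eq : ∀ t ≥ (0:ℝ),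
      G t = F t - ∫ s in Ioc 0 t, δ (runMax V s) ∂F.measure := fun t ht =>
    (hG t ht).trans <| runMax_sub_setIntegral ht (bddAbove_image_Icc_of_cadlag hrc hll t)
      (fun s hs => hF s hs.1) (fun s hs => hD_mem s hs.1) (hD_int t) fun s hs => hV s hs.1
  intro t ht
  rw [hV t ht, StieltjesFunction.setIntegral_Ioc_eq_setIntegral_mul
    (fun s hs => sub_nonneg.2 (hD_mem s hs).2)
    (fun b => (F.integrableOn_const_Ioc 0 b 1).sub (hD_int b))
    fun a b ha hab => F.sub_eq_setIntegral_one_sub ha hab (hD_int b)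
      fun t ht => hG_eq t (ha.trans ht.1)]
  refine congrArg _ (setIntegral_congr_fun measurableSet_Ioc fun s hs => ?_)
  have := hκ _ (hx_le s hs.1.le)
  rw [hδ, mul_comm, mul_one_sub_div_one_add (by linarith)]

theorem alternative_natural_tax_equation
    (x : ℝ) (X : ℝ → ℝ)
    (hX0 : X 0 = x)
    (hrc : ∀ t ≥ (0:ℝ), ContinuousWithinAt X (Set.Ici t) t)
    (hll : ∀ t > (0:ℝ), ∃ l : ℝ, Tendsto X (nhdsWithin t (Set.Iio t)) (nhds l))
    (hnuj : ∀ t > (0:ℝ), ∀ l : ℝ,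
      Tendsto X (nhdsWithin t (Set.Iio t)) (nhds l) → X t ≤ l)
    (F : StieltjesFunction ℝ) (hF : ∀ t ≥ (0:ℝ), F t = runMax X t)
    (κ : ℝ → ℝ) (hκmeas : Measurable κ) (hκ : ∀ z ≥ x, 0 ≤ κ z)
    (δ : ℝ → ℝ) (hδ : ∀ z, δ z = κ z / (1 + κ z))
    -- V solves the natural tax integral equation with rate δ:
    (V : ℝ → ℝ)
    (hV : ∀ t ≥ (0:ℝ), V t = X t - ∫ s in Set.Ioc 0 t, δ (runMax V s) ∂F.measure)
    -- the Lebesgue–Stieltjes measure of the running maximum of V: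
    (G : StieltjesFunction ℝ) (hG : ∀ t ≥ (0:ℝ), G t = runMax V t) :
    ∀ t ≥ (0:ℝ), V t = X t - ∫ s in Set.Ioc 0 t, κ (runMax V s) ∂G.measure :=
  alternative_natural_tax_equation_general x X hX0 hrc hll F hF κ hκmeas hκ δ hδ V hV G hG
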